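/- (Corollary 1 of the paper.) Let ψ* be a Markov coordination strategy such that, for each t and each count vector z with ∑_a z(a) = n, ψ*_t(z) attains the minimum in the dynamic-programming recursion V_t(z) = min_γ [ℓ̂_t(z, γ) + ∑_{z'} T̂_t(z, γ)(z') V_{t+1}(z')] (with V_{T+1} ≡ 0). Define the symmetric decentralized strategy g* by g*_t(z_{1:t}, x) := ψ*_t(z_t)(x). Then g* is globally optimal among all symmetric decentralized strategies: for every symmetric strategy g (where each controller uses U_t^i = g_t(Z_{1:t}, X_t^i) with the same g_t), J(g*) ≤ J(g), and J(g*) = ∑_z P(Z_1 = z) V_1(z). -/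

import Mathlib

open scoped ENNReal

def emp {X : Type*} [DecidableEq X] {n : ℕ} (x : Fin n → X) : X → ℕ :=
  fun a => (Finset.univ.filter (fun i => x i = a)).card

def Hset {X : Type*} [Fintype X] [DecidableEq X] (n : ℕ) (m : X → ℕ) : Finset (Fin n → X) :=
  Finset.univ.filter (fun x => emp x = m)

noncomputable def iid {W : Type*} [Fintype W] (n : ℕ) (ν : PMF W) : PMF (Fin n → W) :=
  PMF.ofFintype (fun w => ∏ i, ν (w i)) (by
    have h : ∑ j : W, ν j = 1 := by rw [← ν.tsum_coe, tsum_fintype]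
    rw [← Fintype.prod_sum]; simp [h])

variable {X U W : Type*} [Fintype X] [DecidableEq X] [Nonempty X]
  [Fintype U] [Nonempty U] [Fintype W]

/-- Closed-loop law of the state trajectory `(X_0, …, X_t)` in the decentralized system with
symmetric strategy `g`: each controller applies `U_t^i = g_t(Z_{0:t}, X_t^i)`. -/
noncomputable def hist (n : ℕ) (PX : PMF X) (PW : ℕ → PMF W)
    (f : ℕ → X → U → W → (X → ℕ) → X)
    (g : (t : ℕ) → (Fin (t + 1) → (X → ℕ)) → X → U) :
    (t : ℕ) → PMF (Fin (t + 1) → (Fin n → X))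
  | 0 => (iid n PX).map (fun x _ => x)
  | t + 1 =>
    (hist n PX PW f g t).bind (fun xs =>
      (iid n (PW t)).map (fun w =>
        Fin.snoc xs (fun i =>
          f t (xs (Fin.last t) i)
            (g t (fun s => emp (xs s)) (xs (Fin.last t) i))
            (w i) (emp (xs (Fin.last t))))))

/-- The (finite) space of achievable mean fields. -/
def Mspace (X : Type*) [Fintype X] [DecidableEq X] (n : ℕ) : Finset (X → ℕ) :=
  Finset.univ.image (fun x : Fin n → X => emp x)

/-- `ℓ̂_t(m, γ)`: average cost over the uniform distribution on `H(m)`. -/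
noncomputable def lhat (n : ℕ) (ℓ : ℕ → (Fin n → X) → (Fin n → U) → ℝ)
    (t : ℕ) (m : X → ℕ) (γ : X → U) : ℝ :=
  (∑ x ∈ Hset n m, ℓ t x (fun i => γ (x i))) / ((Hset n m).card : ℝ)

/-- `T̂_t(m, γ)(m')`: the mean-field transition kernel (independent of the representative). -/
noncomputable def That (n : ℕ) (PW : ℕ → PMF W) (f : ℕ → X → U → W → (X → ℕ) → X)
    (t : ℕ) (m : X → ℕ) (γ : X → U) (m' : X → ℕ) : ℝ≥0∞ :=
  (∑ x0 ∈ Hset n m,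
    ∑ w ∈ Finset.univ.filter
      (fun w : Fin n → W => emp (fun i => f t (x0 i) (γ (x0 i)) (w i) m) = m'),
      iid n (PW t) w) / ((Hset n m).card : ℝ≥0∞)

/-- The dynamic-programming value functions `V_t`, with `V_T ≡ 0`. -/
noncomputable def V (n T : ℕ) (PW : ℕ → PMF W) (f : ℕ → X → U → W → (X → ℕ) → X)
    (ℓ : ℕ → (Fin n → X) → (Fin n → U) → ℝ) (t : ℕ) : (X → ℕ) → ℝ :=
  if t < T then fun m =>
    Finset.univ.inf' Finset.univ_nonempty (fun γ : X → U =>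
      lhat n ℓ t m γ +
        ∑ m' ∈ Mspace X n, (That n PW f t m γ m').toReal * V n T PW f ℓ (t + 1) m')
  else fun _ => 0
termination_by T - t

/-- Expected total cost `J(g)` of a symmetric decentralized strategy. -/
noncomputable def Jdec (n T : ℕ) (PX : PMF X) (PW : ℕ → PMF W)
    (f : ℕ → X → U → W → (X → ℕ) → X) (ℓ : ℕ → (Fin n → X) → (Fin n → U) → ℝ)
    (g : (t : ℕ) → (Fin (t + 1) → (X → ℕ)) → X → U) : ℝ :=
  ∑ t ∈ Finset.range T, ∑ xs : Fin (t + 1) → (Fin n → X),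
    (hist n PX PW f g t xs).toReal *
      ℓ t (xs (Fin.last t)) (fun i => g t (fun s => emp (xs s)) (xs (Fin.last t) i))

/-!
Relabelling the subsystems leaves the law of the closed-loop trajectory invariant, because the
initial states and the noises are i.i.d. and every controller applies the same map. Hence, given
the history of empirical counts `Z_{0:t}`, the profile `X_t` is uniform on `H(Z_t)` and the next
count `Z_{t+1}` has law `T̂_t(Z_t, g_t(Z_{0:t}))`. So the expected stage cost of any symmetric
strategy `g` is `E[ℓ̂_t(Z_t, g_t(Z_{0:t}))]`, and the definition of `V_t` as a minimum gives
`E[V_t(Z_t)] ≤ E[ℓ̂_t(Z_t, g_t(Z_{0:t}))] + E[V_{t+1}(Z_{t+1})]`, with equality for `g*`.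
Telescoping over `t < T` yields `E[V_0(Z_0)] ≤ J(g)`, with equality at `g*`.
-/

section Counting

open Finset

variable {α : Type*} [DecidableEq α] {n : ℕ}

lemma emp_comp_perm (x : Fin n → α) (σ : Equiv.Perm (Fin n)) : emp (x ∘ σ) = emp x := by
  funext a
  simp only [emp, ← Fintype.card_subtype]
  exact Fintype.card_congr (σ.subtypeEquiv fun i => by simp)

lemma exists_perm_eq_comp_of_emp_eq {x y : Fin n → α} (h : emp x = emp y) :
    ∃ σ : Equiv.Perm (Fin n), y = x ∘ σ := by
  have hfib : ∀ a, Fintype.card {i // y i = a} = Fintype.card {i // x i = a} := fun a => by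
    simpa [emp, Fintype.card_subtype] using (congrFun h a).symm
  let fib a : {i // y i = a} ≃ {i // x i = a} := Fintype.equivOfCardEq (hfib a)
  let σ : Equiv.Perm (Fin n) := (Equiv.sigmaFiberEquiv y).symm.trans
    ((Equiv.sigmaCongrRight fib).trans (Equiv.sigmaFiberEquiv x))
  exact ⟨σ, funext fun i => ((fib (y i) ⟨i, rfl⟩).2).symm⟩

variable [Fintype α]

lemma mem_Hset {m : α → ℕ} {x : Fin n → α} : x ∈ Hset n m ↔ emp x = m := by
  simp [Hset]

lemma emp_mem_Mspace (x : Fin n → α) : emp x ∈ Mspace α n :=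
  mem_image_of_mem _ (mem_univ x)

lemma Hset_emp_nonempty (y : Fin n → α) : (Hset n (emp y)).Nonempty :=
  ⟨y, mem_Hset.2 rfl⟩

-- `{σ | y ∘ σ = y ∘ τ}` is the coset `stab(y) * τ`.
lemma card_filter_comp_eq_of_mem_Hset {y x : Fin n → α} (hx : x ∈ Hset n (emp y)) :
    #{σ : Equiv.Perm (Fin n) | y ∘ σ = x} = #{σ : Equiv.Perm (Fin n) | y ∘ σ = y} := by
  obtain ⟨τ, rfl⟩ := exists_perm_eq_comp_of_emp_eq (mem_Hset.1 hx).symm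
  refine card_bij' (fun σ _ => σ * τ⁻¹) (fun σ _ => σ * τ) ?_ ?_ ?_ ?_ <;>
    simp +contextual [funext_iff]

lemma sum_perm_comp {M : Type*} [AddCommMonoid M] (y : Fin n → α) (G : (Fin n → α) → M) :
    ∑ σ : Equiv.Perm (Fin n), G (y ∘ σ) =
      #{σ : Equiv.Perm (Fin n) | y ∘ σ = y} • ∑ x ∈ Hset n (emp y), G x := by
  rw [← sum_fiberwise_of_maps_to (g := fun σ : Equiv.Perm (Fin n) => y ∘ σ)
    (fun σ _ => mem_Hset.2 (emp_comp_perm y σ)), smul_sum]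
  refine sum_congr rfl fun x hx => ?_
  rw [sum_congr rfl fun σ hσ => by rw [(mem_filter.1 hσ).2], sum_const,
    card_filter_comp_eq_of_mem_Hset hx]

lemma card_perm_eq_card_stabilizer_mul_card_Hset (y : Fin n → α) :
    Fintype.card (Equiv.Perm (Fin n)) =
      #{σ : Equiv.Perm (Fin n) | y ∘ σ = y} * #(Hset n (emp y)) := by
  simpa using sum_perm_comp y (fun _ => (1 : ℕ))

lemma sum_perm_comp_eq_card_mul_average (y : Fin n → α) (G : (Fin n → α) → ℝ) :
    ∑ σ : Equiv.Perm (Fin n), G (y ∘ σ) =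
      Fintype.card (Equiv.Perm (Fin n)) * ((∑ x ∈ Hset n (emp y), G x) / #(Hset n (emp y))) := by
  have hH : (#(Hset n (emp y)) : ℝ) ≠ 0 := by simpa using (Hset_emp_nonempty y).ne_empty
  rw [sum_perm_comp, card_perm_eq_card_stabilizer_mul_card_Hset y, nsmul_eq_mul]
  push_cast
  field_simp

end Counting

namespace PMF

open Finset

variable {α β : Type*} [Fintype α]

lemma map_apply_eq_sum_filter [DecidableEq β] (p : PMF α) (e : α → β) (b : β) :
    p.map e b = ∑ a with e a = b, p a := by
  rw [map_apply, tsum_fintype, sum_filter]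
  exact sum_congr rfl fun a _ => by simp only [eq_comm]; congr

lemma sum_toReal_map_mul [DecidableEq β] (p : PMF α) {e : α → β} {s : Finset β}
    (hs : ∀ a, e a ∈ s) (φ : β → ℝ) :
    ∑ b ∈ s, (p.map e b).toReal * φ b = ∑ a, (p a).toReal * φ (e a) := by
  rw [← sum_fiberwise_of_maps_to (g := e) (t := s) fun a _ => hs a]
  refine sum_congr rfl fun b _ => ?_
  rw [map_apply_eq_sum_filter, ENNReal.toReal_sum fun a _ => apply_ne_top p a, sum_mul]
  exact sum_congr rfl fun a ha => by rw [(mem_filter.1 ha).2]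

lemma sum_toReal_bind_mul [Fintype β] (p : PMF α) (k : α → PMF β) (φ : β → ℝ) :
    ∑ b, (p.bind k b).toReal * φ b = ∑ a, (p a).toReal * ∑ b, (k a b).toReal * φ b := by
  simp_rw [bind_apply, tsum_fintype, ENNReal.toReal_sum fun a _ =>
    ENNReal.mul_ne_top (apply_ne_top p a) (apply_ne_top (k a) _), ENNReal.toReal_mul, sum_mul,
    mul_sum, mul_assoc]
  exact sum_comm

end PMF

section Exchangeable

open Finset

variable {X : Type*} [Fintype X] [DecidableEq X] {n : ℕ}

lemma sum_toReal_mul_eq_sum_toReal_mul_average {ι : Type*} [Fintype ι] [DecidableEq ι]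
    (p : PMF (ι → Fin n → X))
    (hp : ∀ σ : Equiv.Perm (Fin n), p.map (fun xs s => xs s ∘ σ) = p) (i₀ : ι)
    (F : (ι → X → ℕ) → (Fin n → X) → ℝ) :
    ∑ xs, (p xs).toReal * F (fun s => emp (xs s)) (xs i₀) =
      ∑ xs, (p xs).toReal *
        ((∑ x ∈ Hset n (emp (xs i₀)), F (fun s => emp (xs s)) x) / #(Hset n (emp (xs i₀)))) := by
  have hσ : ∀ σ : Equiv.Perm (Fin n), ∑ xs, (p xs).toReal * F (fun s => emp (xs s)) (xs i₀) =
      ∑ xs, (p xs).toReal * F (fun s => emp (xs s)) (xs i₀ ∘ σ) := fun σ => by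
    conv_lhs => rw [← hp σ]
    simp only [PMF.sum_toReal_map_mul _ (s := univ) (fun _ => mem_univ _), emp_comp_perm]
  have hN : (Fintype.card (Equiv.Perm (Fin n)) : ℝ) ≠ 0 := Nat.cast_ne_zero.2 Fintype.card_ne_zero
  refine mul_left_cancel₀ hN ?_
  calc _ = ∑ σ : Equiv.Perm (Fin n), ∑ xs, (p xs).toReal * F (fun s => emp (xs s)) (xs i₀) := by
        rw [sum_const, card_univ, nsmul_eq_mul]
    _ = ∑ xs, (p xs).toReal * ∑ σ : Equiv.Perm (Fin n), F (fun s => emp (xs s)) (xs i₀ ∘ σ) := by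
        rw [sum_congr rfl fun σ _ => hσ σ, sum_comm]
        simp only [mul_sum]
    _ = _ := by
        simp only [sum_perm_comp_eq_card_mul_average, mul_sum, mul_left_comm]

end Exchangeable

section Dynamics

variable {X U W : Type*} {n : ℕ}

def nextProfile (f : ℕ → X → U → W → (X → ℕ) → X) (t : ℕ) (γ : X → U) (m : X → ℕ)
    (x : Fin n → X) (w : Fin n → W) : Fin n → X :=
  fun i => f t (x i) (γ (x i)) (w i) m

lemma nextProfile_comp_perm (f : ℕ → X → U → W → (X → ℕ) → X) (t : ℕ) (γ : X → U)
    (m : X → ℕ) (x : Fin n → X) (w : Fin n → W) (σ : Equiv.Perm (Fin n)) :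
    nextProfile f t γ m (x ∘ σ) (w ∘ σ) = nextProfile f t γ m x w ∘ σ :=
  rfl

open Finset

variable [Fintype X] [DecidableEq X] [Fintype W]

lemma iid_comp_perm (ν : PMF W) (w : Fin n → W) (σ : Equiv.Perm (Fin n)) :
    iid n ν (w ∘ σ) = iid n ν w :=
  Equiv.prod_comp σ fun i => ν (w i)

lemma iid_map_comp_perm (ν : PMF W) (σ : Equiv.Perm (Fin n)) :
    (iid n ν).map (· ∘ σ) = iid n ν := by
  classical
  ext w
  have hpre : ∀ v : Fin n → W, v ∘ σ = w ↔ v = w ∘ σ.symm := fun v => by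
    constructor <;> rintro rfl <;> ext <;> simp
  simp only [PMF.map_apply_eq_sum_filter, hpre, filter_eq', mem_univ, if_true, sum_singleton,
    iid_comp_perm]

variable (PX : PMF X) (PW : ℕ → PMF W) (f : ℕ → X → U → W → (X → ℕ) → X)
  (g : (t : ℕ) → (Fin (t + 1) → (X → ℕ)) → X → U)

lemma hist_succ (t : ℕ) :
    hist n PX PW f g (t + 1) = (hist n PX PW f g t).bind fun xs =>
      (iid n (PW t)).map fun w => Fin.snoc xs
        (nextProfile f t (g t fun s => emp (xs s)) (emp (xs (Fin.last t))) (xs (Fin.last t)) w) :=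
  rfl

lemma hist_map_comp_perm (σ : Equiv.Perm (Fin n)) :
    ∀ t, (hist n PX PW f g t).map (fun xs s => xs s ∘ σ) = hist n PX PW f g t
  | 0 => by
    conv_rhs => rw [hist, ← iid_map_comp_perm PX σ, PMF.map_comp]
    rw [hist, PMF.map_comp]
    rfl
  | t + 1 => by
    conv_rhs => rw [hist_succ, ← hist_map_comp_perm σ t, PMF.bind_map]
    rw [hist_succ, PMF.map_bind]
    congr 1
    funext ys
    conv_rhs => rw [← iid_map_comp_perm (PW t) σ]
    simp only [Function.comp_apply, PMF.map_comp, emp_comp_perm]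
    congr 1
    funext w
    simp only [Function.comp_apply, nextProfile_comp_perm]
    exact Fin.comp_snoc (· ∘ σ) ys _

lemma sum_hist_succ (t : ℕ) (φ : (Fin (t + 2) → Fin n → X) → ℝ) :
    ∑ xs, (hist n PX PW f g (t + 1) xs).toReal * φ xs =
      ∑ ys, (hist n PX PW f g t ys).toReal * ∑ w, (iid n (PW t) w).toReal *
        φ (Fin.snoc ys (nextProfile f t (g t fun s => emp (ys s)) (emp (ys (Fin.last t)))
          (ys (Fin.last t)) w)) := by
  simp only [hist_succ, PMF.sum_toReal_bind_mul, PMF.sum_toReal_map_mul _ (s := univ)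
    (fun _ => mem_univ _)]

end Dynamics

section MeanFieldKernel

open Finset

variable {X U W : Type*} [DecidableEq X] [Fintype W] {n : ℕ}
  (PW : ℕ → PMF W) (f : ℕ → X → U → W → (X → ℕ) → X) (t : ℕ) (γ : X → U)

noncomputable def nextEmpLaw (m : X → ℕ) (x : Fin n → X) : PMF (X → ℕ) :=
  (iid n (PW t)).map fun w => emp (nextProfile f t γ m x w)

lemma nextEmpLaw_comp_perm (m : X → ℕ) (x : Fin n → X) (σ : Equiv.Perm (Fin n)) :
    nextEmpLaw PW f t γ m (x ∘ σ) = nextEmpLaw PW f t γ m x := by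
  conv_lhs => rw [nextEmpLaw, ← iid_map_comp_perm (PW t) σ, PMF.map_comp]
  congr 1
  funext w
  simp only [Function.comp_apply, nextProfile_comp_perm, emp_comp_perm]

lemma nextEmpLaw_eq_of_emp_eq (m : X → ℕ) {x y : Fin n → X} (h : emp x = emp y) :
    nextEmpLaw PW f t γ m x = nextEmpLaw PW f t γ m y := by
  obtain ⟨σ, rfl⟩ := exists_perm_eq_comp_of_emp_eq h.symm
  exact nextEmpLaw_comp_perm PW f t γ m y σ

variable [Fintype X]

lemma That_eq_average_nextEmpLaw (m m' : X → ℕ) :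
    That n PW f t m γ m' = (∑ x₀ ∈ Hset n m, nextEmpLaw PW f t γ m x₀ m') / #(Hset n m) := by
  simp only [That, nextEmpLaw, PMF.map_apply_eq_sum_filter]
  rfl

lemma That_emp (y : Fin n → X) (m' : X → ℕ) :
    That n PW f t (emp y) γ m' = nextEmpLaw PW f t γ (emp y) y m' := by
  have hH : (#(Hset n (emp y)) : ℝ≥0∞) ≠ 0 := by simpa using (Hset_emp_nonempty y).ne_empty
  rw [That_eq_average_nextEmpLaw, sum_congr rfl fun x₀ hx₀ => by
      rw [nextEmpLaw_eq_of_emp_eq PW f t γ _ (mem_Hset.1 hx₀)],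
    sum_const, nsmul_eq_mul', ENNReal.mul_div_cancel_right hH (ENNReal.natCast_ne_top _)]

lemma sum_iid_toReal_mul_emp_nextProfile (y : Fin n → X) (φ : (X → ℕ) → ℝ) :
    ∑ w, (iid n (PW t) w).toReal * φ (emp (nextProfile f t γ (emp y) y w)) =
      ∑ m' ∈ Mspace X n, (That n PW f t (emp y) γ m').toReal * φ m' := by
  simp only [That_emp, nextEmpLaw]
  exact (PMF.sum_toReal_map_mul _ (fun _ => emp_mem_Mspace _) φ).symm

end MeanFieldKernel

section DynamicProgram

open Finset

variable {X U W : Type*} [Fintype X] [DecidableEq X] [Fintype W]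
  (n T : ℕ) (PX : PMF X) (PW : ℕ → PMF W) (f : ℕ → X → U → W → (X → ℕ) → X)
  (ℓ : ℕ → (Fin n → X) → (Fin n → U) → ℝ) (g : (t : ℕ) → (Fin (t + 1) → (X → ℕ)) → X → U)

noncomputable def stageCost (t : ℕ) : ℝ :=
  ∑ xs : Fin (t + 1) → Fin n → X, (hist n PX PW f g t xs).toReal *
    ℓ t (xs (Fin.last t)) (fun i => g t (fun s => emp (xs s)) (xs (Fin.last t) i))

lemma Jdec_eq_sum_stageCost :
    Jdec n T PX PW f ℓ g = ∑ t ∈ range T, stageCost n PX PW f ℓ g t :=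
  rfl

-- Given `Z_{0:t}`, the profile `X_t` is uniform on `H(Z_t)`, so the cost averages to `ℓ̂_t`.
lemma stageCost_eq_sum_lhat (t : ℕ) :
    stageCost n PX PW f ℓ g t = ∑ xs, (hist n PX PW f g t xs).toReal *
      lhat n ℓ t (emp (xs (Fin.last t))) (g t fun s => emp (xs s)) :=
  sum_toReal_mul_eq_sum_toReal_mul_average _ (fun σ => hist_map_comp_perm PX PW f g σ t)
    (Fin.last t) (fun zs x => ℓ t x fun i => g t zs (x i))

lemma sum_hist_succ_emp_last (t : ℕ) (φ : (X → ℕ) → ℝ) :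
    ∑ xs, (hist n PX PW f g (t + 1) xs).toReal * φ (emp (xs (Fin.last (t + 1)))) =
      ∑ ys, (hist n PX PW f g t ys).toReal * ∑ m' ∈ Mspace X n,
        (That n PW f t (emp (ys (Fin.last t))) (g t fun s => emp (ys s)) m').toReal * φ m' := by
  simp only [sum_hist_succ, Fin.snoc_last, sum_iid_toReal_mul_emp_nextProfile]

variable [Fintype U] [Nonempty U]

lemma V_le_lhat_add {t : ℕ} (ht : t < T) (m : X → ℕ) (γ : X → U) :
    V n T PW f ℓ t m ≤
      lhat n ℓ t m γ +
        ∑ m' ∈ Mspace X n, (That n PW f t m γ m').toReal * V n T PW f ℓ (t + 1) m' := by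
  rw [V, if_pos ht]
  exact inf'_le _ (mem_univ γ)

lemma V_eq_zero_of_le {t : ℕ} (ht : T ≤ t) (m : X → ℕ) : V n T PW f ℓ t m = 0 := by
  rw [V, if_neg ht.not_gt]

noncomputable def expectedValue (t : ℕ) : ℝ :=
  ∑ xs : Fin (t + 1) → Fin n → X, (hist n PX PW f g t xs).toReal *
    V n T PW f ℓ t (emp (xs (Fin.last t)))

lemma expectedValue_le_stageCost_add {t : ℕ} (ht : t < T) :
    expectedValue n T PX PW f ℓ g t ≤
      stageCost n PX PW f ℓ g t + expectedValue n T PX PW f ℓ g (t + 1) := by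
  rw [stageCost_eq_sum_lhat, expectedValue, expectedValue, sum_hist_succ_emp_last,
    ← sum_add_distrib]
  refine sum_le_sum fun xs _ => ?_
  rw [← mul_add]
  exact mul_le_mul_of_nonneg_left (V_le_lhat_add _ _ _ _ _ ht _ _) ENNReal.toReal_nonneg

lemma expectedValue_eq_stageCost_add_of_minimizer (ψ : ℕ → (X → ℕ) → X → U)
    (hψ : ∀ t < T, ∀ z ∈ Mspace X n,
      V n T PW f ℓ t z = lhat n ℓ t z (ψ t z) +
        ∑ z' ∈ Mspace X n, (That n PW f t z (ψ t z) z').toReal * V n T PW f ℓ (t + 1) z')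
    {t : ℕ} (ht : t < T) :
    expectedValue n T PX PW f ℓ (fun t zs => ψ t (zs (Fin.last t))) t =
      stageCost n PX PW f ℓ (fun t zs => ψ t (zs (Fin.last t))) t +
        expectedValue n T PX PW f ℓ (fun t zs => ψ t (zs (Fin.last t))) (t + 1) := by
  rw [stageCost_eq_sum_lhat, expectedValue, expectedValue, sum_hist_succ_emp_last,
    ← sum_add_distrib]
  refine sum_congr rfl fun xs _ => ?_
  rw [← mul_add, hψ t ht _ (emp_mem_Mspace _)]

lemma expectedValue_zero :
    expectedValue n T PX PW f ℓ g 0 =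
      ∑ z ∈ Mspace X n, (∑ x ∈ Hset n z, iid n PX x).toReal * V n T PW f ℓ 0 z := by
  simp only [expectedValue, hist, Hset, ← PMF.map_apply_eq_sum_filter]
  rw [PMF.sum_toReal_map_mul _ (s := univ) (fun _ => mem_univ _),
    PMF.sum_toReal_map_mul _ emp_mem_Mspace]

lemma expectedValue_eq_zero_of_le {t : ℕ} (ht : T ≤ t) : expectedValue n T PX PW f ℓ g t = 0 := by
  simp [expectedValue, V_eq_zero_of_le _ _ _ _ _ ht]

end DynamicProgram

theorem stmt9_general (n T : ℕ) (PX : PMF X) (PW : ℕ → PMF W)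
    (f : ℕ → X → U → W → (X → ℕ) → X) (ℓ : ℕ → (Fin n → X) → (Fin n → U) → ℝ)
    (ψstar : ℕ → (X → ℕ) → X → U)
    (hmin : ∀ t < T, ∀ z ∈ Mspace X n,
      V n T PW f ℓ t z = lhat n ℓ t z (ψstar t z) +
        ∑ z' ∈ Mspace X n,
          (That n PW f t z (ψstar t z) z').toReal * V n T PW f ℓ (t + 1) z') :
    (∀ g : (t : ℕ) → (Fin (t + 1) → (X → ℕ)) → X → U,
      Jdec n T PX PW f ℓ (fun t zs => ψstar t (zs (Fin.last t))) ≤ Jdec n T PX PW f ℓ g) ∧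
    Jdec n T PX PW f ℓ (fun t zs => ψstar t (zs (Fin.last t)))
      = ∑ z ∈ Mspace X n, (∑ x ∈ Hset n z, iid n PX x).toReal * V n T PW f ℓ 0 z := by
  have htelescope : ∀ g : (t : ℕ) → (Fin (t + 1) → (X → ℕ)) → X → U,
      ∑ t ∈ Finset.range T, (expectedValue n T PX PW f ℓ g t -
        expectedValue n T PX PW f ℓ g (t + 1)) =
      ∑ z ∈ Mspace X n, (∑ x ∈ Hset n z, iid n PX x).toReal * V n T PW f ℓ 0 z := fun g => by
    rw [Finset.sum_range_sub', expectedValue_eq_zero_of_le n T PX PW f ℓ g le_rfl, sub_zero,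
      expectedValue_zero]
  have hopt : Jdec n T PX PW f ℓ (fun t zs => ψstar t (zs (Fin.last t))) =
      ∑ z ∈ Mspace X n, (∑ x ∈ Hset n z, iid n PX x).toReal * V n T PW f ℓ 0 z := by
    rw [Jdec_eq_sum_stageCost, ← htelescope]
    refine Finset.sum_congr rfl fun t ht => ?_
    rw [expectedValue_eq_stageCost_add_of_minimizer n T PX PW f ℓ ψstar hmin
      (Finset.mem_range.1 ht)]
    ring
  refine ⟨fun g => ?_, hopt⟩
  rw [hopt, Jdec_eq_sum_stageCost, ← htelescope g]
  refine Finset.sum_le_sum fun t ht => ?_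
  linarith [expectedValue_le_stageCost_add n T PX PW f ℓ g (Finset.mem_range.1 ht)]

/-- Corollary 1: the symmetric decentralized strategy `g*_t(z_{0:t}, x) := ψ*_t(z_t)(x)`
obtained from any minimizer `ψ*` of the dynamic program is globally optimal among all
symmetric decentralized strategies, and its cost is `∑_z P(Z_1 = z) V_1(z)`. -/
theorem stmt9 (n T : ℕ) (hn : 1 ≤ n) (PX : PMF X) (PW : ℕ → PMF W)
    (f : ℕ → X → U → W → (X → ℕ) → X) (ℓ : ℕ → (Fin n → X) → (Fin n → U) → ℝ)
    (ψstar : ℕ → (X → ℕ) → X → U)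
    (hmin : ∀ t < T, ∀ z ∈ Mspace X n,
      V n T PW f ℓ t z = lhat n ℓ t z (ψstar t z) +
        ∑ z' ∈ Mspace X n,
          (That n PW f t z (ψstar t z) z').toReal * V n T PW f ℓ (t + 1) z') :
    (∀ g : (t : ℕ) → (Fin (t + 1) → (X → ℕ)) → X → U,
      Jdec n T PX PW f ℓ (fun t zs => ψstar t (zs (Fin.last t))) ≤ Jdec n T PX PW f ℓ g) ∧
    Jdec n T PX PW f ℓ (fun t zs => ψstar t (zs (Fin.last t)))
      = ∑ z ∈ Mspace X n, (∑ x ∈ Hset n z, iid n PX x).toReal * V n T PW f ℓ 0 z :=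
  stmt9_general n T PX PW f ℓ ψstar hmin
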